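/- Let {{−,−}} be a 2-fold bracket on V satisfying the skewsymmetry {{a,b}} = −({{b,a}})^σ. Define {{a,b,c}} := {{a, {{b,c}} }}_L + ({{b, {{c,a}} }}_L)^σ + ({{c, {{a,b}} }}_L)^{σ²} ∈ V^{⊗3}. Then {{−,−,−}} is a 3-fold bracket on V; that is, for all a,b,c,x,y ∈ V: {{xy,b,c}} = x ⋆₁ {{y,b,c}} + {{x,b,c}} ⋆₂ y; {{a,xy,c}} = x ⋆₂ {{a,y,c}} + {{a,x,c}} ⋆₁ y; and {{a,b,xy}} = x·{{a,b,y}} + {{a,b,x}}·y (outer bimodule action on V^{⊗3}). -/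

import Mathlib

open TensorProduct LinearMap

section DPA

variable (𝔽 : Type) [Field 𝔽] (V : Type) [Ring V] [Algebra 𝔽 V]

/-- The swap `(u ⊗ v)^σ = v ⊗ u` on `V ⊗ V`. -/
noncomputable abbrev swap2 : V ⊗[𝔽] V ≃ₗ[𝔽] V ⊗[𝔽] V := TensorProduct.comm 𝔽 V V

/-- The cyclic permutation `(u ⊗ v ⊗ w)^σ = w ⊗ u ⊗ v` on `V ⊗ V ⊗ V = (V ⊗ V) ⊗ V`. -/
noncomputable def sigma3 : (V ⊗[𝔽] V) ⊗[𝔽] V ≃ₗ[𝔽] (V ⊗[𝔽] V) ⊗[𝔽] V :=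
  (TensorProduct.comm 𝔽 (V ⊗[𝔽] V) V).trans (TensorProduct.assoc 𝔽 V V V).symm

/-- Left multiplication `a · (u ⊗ v) = (a*u) ⊗ v` (outer bimodule structure). -/
noncomputable def lact2 (a : V) : V ⊗[𝔽] V →ₗ[𝔽] V ⊗[𝔽] V :=
  LinearMap.rTensor V (LinearMap.mulLeft 𝔽 a)

/-- Right multiplication `(u ⊗ v) · c = u ⊗ (v*c)` (outer bimodule structure). -/
noncomputable def ract2 (c : V) : V ⊗[𝔽] V →ₗ[𝔽] V ⊗[𝔽] V :=
  LinearMap.lTensor V (LinearMap.mulRight 𝔽 c)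

/-- `(u ⊗ v) ⋆₁ b = (u*b) ⊗ v`. -/
noncomputable def star1r (b : V) : V ⊗[𝔽] V →ₗ[𝔽] V ⊗[𝔽] V :=
  LinearMap.rTensor V (LinearMap.mulRight 𝔽 b)

/-- `a ⋆₁ (u ⊗ v) = u ⊗ (a*v)`. -/
noncomputable def star1l (a : V) : V ⊗[𝔽] V →ₗ[𝔽] V ⊗[𝔽] V :=
  LinearMap.lTensor V (LinearMap.mulLeft 𝔽 a)

/-- The `•`-product on `V ⊗ V`:  `(u ⊗ v) • (x ⊗ y) = (u*x) ⊗ (y*v)`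
(the multiplication of `V ⊗ Vᵒᵖ`). -/
noncomputable def bullet : V ⊗[𝔽] V →ₗ[𝔽] V ⊗[𝔽] V →ₗ[𝔽] V ⊗[𝔽] V :=
  TensorProduct.lift
    (((TensorProduct.mapBilinear (RingHom.id 𝔽) V V V V).comp (LinearMap.mul 𝔽 V)).compl₂
      ((LinearMap.mul 𝔽 V).flip))

/-- A `2`-fold bracket on `V`: an `𝔽`-bilinear map `V × V → V ⊗ V` satisfying the two
Leibniz rules `{{a,bc}} = {{a,b}}·c + b·{{a,c}}` and `{{ab,c}} = {{a,c}} ⋆₁ b + a ⋆₁ {{b,c}}`. -/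
def IsDoubleBracket (Br : V →ₗ[𝔽] V →ₗ[𝔽] V ⊗[𝔽] V) : Prop :=
  (∀ a b c : V, Br a (b * c) = ract2 𝔽 V c (Br a b) + lact2 𝔽 V b (Br a c)) ∧
  (∀ a b c : V, Br (a * b) c = star1r 𝔽 V b (Br a c) + star1l 𝔽 V a (Br b c))

variable {𝔽 V}

/-- `{{a, B}}_L` : apply the bracket to the first tensor factor. -/
noncomputable def brL (Br : V →ₗ[𝔽] V →ₗ[𝔽] V ⊗[𝔽] V) (a : V) :
    V ⊗[𝔽] V →ₗ[𝔽] (V ⊗[𝔽] V) ⊗[𝔽] V :=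
  LinearMap.rTensor V (Br a)

/-- `{{a, B}}_R` : apply the bracket to the second tensor factor. -/
noncomputable def brR (Br : V →ₗ[𝔽] V →ₗ[𝔽] V ⊗[𝔽] V) (a : V) :
    V ⊗[𝔽] V →ₗ[𝔽] (V ⊗[𝔽] V) ⊗[𝔽] V :=
  (TensorProduct.assoc 𝔽 V V V).symm.toLinearMap ∘ₗ LinearMap.lTensor V (Br a)

variable (𝔽 V)

/-- `ρ₂` : swap the last two tensor factors of `V ⊗ V ⊗ V`. -/
noncomputable def rho2 : (V ⊗[𝔽] V) ⊗[𝔽] V ≃ₗ[𝔽] (V ⊗[𝔽] V) ⊗[𝔽] V :=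
  (TensorProduct.assoc 𝔽 V V V).trans
    ((TensorProduct.congr (LinearEquiv.refl 𝔽 V) (TensorProduct.comm 𝔽 V V)).trans
      (TensorProduct.assoc 𝔽 V V V).symm)

variable {𝔽 V}

/-- Conjugated bullet action used to define the actions `•ᵢ` of `V ⊗ V` on `V ⊗ V ⊗ V`. -/
noncomputable def conjAct (β : V ⊗[𝔽] V →ₗ[𝔽] V ⊗[𝔽] V →ₗ[𝔽] V ⊗[𝔽] V)
    (ρ : (V ⊗[𝔽] V) ⊗[𝔽] V ≃ₗ[𝔽] (V ⊗[𝔽] V) ⊗[𝔽] V) :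
    V ⊗[𝔽] V →ₗ[𝔽] (V ⊗[𝔽] V) ⊗[𝔽] V →ₗ[𝔽] (V ⊗[𝔽] V) ⊗[𝔽] V :=
  (LinearMap.lcomp 𝔽 _ ρ.toLinearMap) ∘ₗ
    (LinearMap.llcomp 𝔽 ((V ⊗[𝔽] V) ⊗[𝔽] V) ((V ⊗[𝔽] V) ⊗[𝔽] V) ((V ⊗[𝔽] V) ⊗[𝔽] V)
      ρ.symm.toLinearMap) ∘ₗ
    (LinearMap.rTensorHom V) ∘ₗ β

variable (𝔽 V)

/-- The right action `X •₁ A`, i.e. `(x⊗y⊗z) •₁ (a⊗b) = x⊗(y*a)⊗(b*z)`;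
`bAct1R A X = X •₁ A`. -/
noncomputable def bAct1R : V ⊗[𝔽] V →ₗ[𝔽] (V ⊗[𝔽] V) ⊗[𝔽] V →ₗ[𝔽] (V ⊗[𝔽] V) ⊗[𝔽] V :=
  conjAct (bullet 𝔽 V).flip ((sigma3 𝔽 V).trans (sigma3 𝔽 V))

/-- The left action `A •₂ X`, i.e. `(a⊗b) •₂ (x⊗y⊗z) = (a*x)⊗y⊗(z*b)`. -/
noncomputable def bAct2L : V ⊗[𝔽] V →ₗ[𝔽] (V ⊗[𝔽] V) ⊗[𝔽] V →ₗ[𝔽] (V ⊗[𝔽] V) ⊗[𝔽] V :=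
  conjAct (bullet 𝔽 V) (rho2 𝔽 V)

/-- The right action `X •₃ A`, i.e. `(x⊗y⊗z) •₃ (a⊗b) = (x*a)⊗(b*y)⊗z`;
`bAct3R A X = X •₃ A`. -/
noncomputable def bAct3R : V ⊗[𝔽] V →ₗ[𝔽] (V ⊗[𝔽] V) ⊗[𝔽] V →ₗ[𝔽] (V ⊗[𝔽] V) ⊗[𝔽] V :=
  conjAct (bullet 𝔽 V).flip (LinearEquiv.refl 𝔽 ((V ⊗[𝔽] V) ⊗[𝔽] V))

/-- `a ⋆₁ (x⊗y⊗z) = x⊗(a*y)⊗z`. -/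
noncomputable def slot2L (a : V) : (V ⊗[𝔽] V) ⊗[𝔽] V →ₗ[𝔽] (V ⊗[𝔽] V) ⊗[𝔽] V :=
  LinearMap.rTensor V (LinearMap.lTensor V (LinearMap.mulLeft 𝔽 a))

/-- `(x⊗y⊗z) ⋆₁ b = x⊗(y*b)⊗z`. -/
noncomputable def slot2R (b : V) : (V ⊗[𝔽] V) ⊗[𝔽] V →ₗ[𝔽] (V ⊗[𝔽] V) ⊗[𝔽] V :=
  LinearMap.rTensor V (LinearMap.lTensor V (LinearMap.mulRight 𝔽 b))

/-- `a ⋆₂ (x⊗y⊗z) = x⊗y⊗(a*z)`. -/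
noncomputable def slot3L (a : V) : (V ⊗[𝔽] V) ⊗[𝔽] V →ₗ[𝔽] (V ⊗[𝔽] V) ⊗[𝔽] V :=
  LinearMap.lTensor (V ⊗[𝔽] V) (LinearMap.mulLeft 𝔽 a)

/-- `(x⊗y⊗z) ⋆₂ b = (x*b)⊗y⊗z`. -/
noncomputable def slot1R (b : V) : (V ⊗[𝔽] V) ⊗[𝔽] V →ₗ[𝔽] (V ⊗[𝔽] V) ⊗[𝔽] V :=
  LinearMap.rTensor V (LinearMap.rTensor V (LinearMap.mulRight 𝔽 b))

/-- outer left: `a · (x⊗y⊗z) = (a*x)⊗y⊗z`. -/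
noncomputable def slot1L (a : V) : (V ⊗[𝔽] V) ⊗[𝔽] V →ₗ[𝔽] (V ⊗[𝔽] V) ⊗[𝔽] V :=
  LinearMap.rTensor V (LinearMap.rTensor V (LinearMap.mulLeft 𝔽 a))

/-- outer right: `(x⊗y⊗z) · b = x⊗y⊗(z*b)`. -/
noncomputable def slot3R (b : V) : (V ⊗[𝔽] V) ⊗[𝔽] V →ₗ[𝔽] (V ⊗[𝔽] V) ⊗[𝔽] V :=
  LinearMap.lTensor (V ⊗[𝔽] V) (LinearMap.mulRight 𝔽 b)

variable {𝔽 V}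

/-- The triple bracket `{{a,b,c}}`. -/
noncomputable def triple (Br : V →ₗ[𝔽] V →ₗ[𝔽] V ⊗[𝔽] V) (a b c : V) :
    (V ⊗[𝔽] V) ⊗[𝔽] V :=
  brL Br a (Br b c) + sigma3 𝔽 V (brL Br b (Br c a)) +
    sigma3 𝔽 V (sigma3 𝔽 V (brL Br c (Br a b)))

variable (𝔽 V)

/-- Skewsymmetry of a 2-fold bracket. -/
def IsSkew (Br : V →ₗ[𝔽] V →ₗ[𝔽] V ⊗[𝔽] V) : Prop :=
  ∀ a b : V, Br a b = - swap2 𝔽 V (Br b a)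

/-- The span of commutators `[V,V]`. -/
def commSub : Submodule 𝔽 V := Submodule.span 𝔽 {x : V | ∃ a b : V, x = a * b - b * a}

variable {𝔽 V}

/-- The associated bracket `{a,b} = m {{a,b}}`. -/
noncomputable def sb (Br : V →ₗ[𝔽] V →ₗ[𝔽] V ⊗[𝔽] V) (a b : V) : V :=
  LinearMap.mul' 𝔽 V (Br a b)

/-- A 2-fold derivation: `D(ab) = (Da)·b + a·(Db)`. -/
def Is2Deriv (D : V →ₗ[𝔽] V ⊗[𝔽] V) : Prop :=
  ∀ a b : V, D (a * b) = ract2 𝔽 V b (D a) + lact2 𝔽 V a (D b)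

/-- `D` and `E` strongly commute: `D_L ∘ E = E_R ∘ D`. -/
def StronglyComm (D E : V →ₗ[𝔽] V ⊗[𝔽] V) : Prop :=
  ∀ f : V, LinearMap.rTensor V D (E f) =
    (TensorProduct.assoc 𝔽 V V V).symm (LinearMap.lTensor V E (D f))

/-!
Since `σ³ = 1`, the triple bracket is cyclic, `{{a,b,c}} = σ {{b,c,a}}`, and `σ` carries the
outer action in the third argument to the `⋆` actions in the other two; so the Leibniz rules in
the first two arguments follow from the one in the third. For that one, expand each of the three
summands of `{{a,b,xy}}` by the Leibniz rules of `{{-,-}}`: besides the expected terms, the first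
summand produces `{{a,x}}' ⊗ {{a,x}}''{{b,y}}' ⊗ {{b,y}}''` and the second produces the same
expression with `{{x,a}}^σ` in place of `{{a,x}}`, and these cancel by skewsymmetry.
-/

variable {Br : V →ₗ[𝔽] V →ₗ[𝔽] V ⊗[𝔽] V}

lemma sigma3_sigma3_sigma3 (X : (V ⊗[𝔽] V) ⊗[𝔽] V) :
    sigma3 𝔽 V (sigma3 𝔽 V (sigma3 𝔽 V X)) = X := by
  have h : (sigma3 𝔽 V).toLinearMap ∘ₗ (sigma3 𝔽 V).toLinearMap ∘ₗ
      (sigma3 𝔽 V).toLinearMap = LinearMap.id :=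
    TensorProduct.ext_threefold fun u v w => by simp [sigma3]
  exact LinearMap.congr_fun h X

lemma sigma3_slot1L (x : V) (X : (V ⊗[𝔽] V) ⊗[𝔽] V) :
    sigma3 𝔽 V (slot1L 𝔽 V x X) = slot2L 𝔽 V x (sigma3 𝔽 V X) := by
  have h : (sigma3 𝔽 V).toLinearMap ∘ₗ slot1L 𝔽 V x =
      slot2L 𝔽 V x ∘ₗ (sigma3 𝔽 V).toLinearMap :=
    TensorProduct.ext_threefold fun u v w => by simp [sigma3, slot1L, slot2L]
  exact LinearMap.congr_fun h X

lemma sigma3_slot3R (y : V) (X : (V ⊗[𝔽] V) ⊗[𝔽] V) :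
    sigma3 𝔽 V (slot3R 𝔽 V y X) = slot1R 𝔽 V y (sigma3 𝔽 V X) := by
  have h : (sigma3 𝔽 V).toLinearMap ∘ₗ slot3R 𝔽 V y =
      slot1R 𝔽 V y ∘ₗ (sigma3 𝔽 V).toLinearMap :=
    TensorProduct.ext_threefold fun u v w => by simp [sigma3, slot3R, slot1R]
  exact LinearMap.congr_fun h X

lemma sigma3_slot2L (x : V) (X : (V ⊗[𝔽] V) ⊗[𝔽] V) :
    sigma3 𝔽 V (slot2L 𝔽 V x X) = slot3L 𝔽 V x (sigma3 𝔽 V X) := by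
  have h : (sigma3 𝔽 V).toLinearMap ∘ₗ slot2L 𝔽 V x =
      slot3L 𝔽 V x ∘ₗ (sigma3 𝔽 V).toLinearMap :=
    TensorProduct.ext_threefold fun u v w => by simp [sigma3, slot2L, slot3L]
  exact LinearMap.congr_fun h X

lemma sigma3_slot1R (y : V) (X : (V ⊗[𝔽] V) ⊗[𝔽] V) :
    sigma3 𝔽 V (slot1R 𝔽 V y X) = slot2R 𝔽 V y (sigma3 𝔽 V X) := by
  have h : (sigma3 𝔽 V).toLinearMap ∘ₗ slot1R 𝔽 V y =
      slot2R 𝔽 V y ∘ₗ (sigma3 𝔽 V).toLinearMap :=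
    TensorProduct.ext_threefold fun u v w => by simp [sigma3, slot1R, slot2R]
  exact LinearMap.congr_fun h X

lemma triple_eq_sigma3_triple (Br : V →ₗ[𝔽] V →ₗ[𝔽] V ⊗[𝔽] V) (a b c : V) :
    triple Br a b c = sigma3 𝔽 V (triple Br b c a) := by
  rw [triple, triple, map_add, map_add, sigma3_sigma3_sigma3]
  abel

/-- `mulMid w (p ⊗ q) = w' ⊗ w''p ⊗ q`. -/
noncomputable def mulMid : V ⊗[𝔽] V →ₗ[𝔽] V ⊗[𝔽] V →ₗ[𝔽] (V ⊗[𝔽] V) ⊗[𝔽] V :=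
  LinearMap.rTensorHom V ∘ₗ (LinearMap.lTensorHom V ∘ₗ (LinearMap.mul 𝔽 V).flip).flip

lemma mulMid_tmul (w : V ⊗[𝔽] V) (p q : V) :
    mulMid w (p ⊗ₜ[𝔽] q) = ract2 𝔽 V p w ⊗ₜ q := by
  rfl

lemma sigma3_lact2_tmul (p q : V) (w : V ⊗[𝔽] V) :
    sigma3 𝔽 V (lact2 𝔽 V p w ⊗ₜ q) = mulMid (q ⊗ₜ[𝔽] p) w := by
  induction w using TensorProduct.induction_on with
  | zero => simp
  | tmul u v => simp [lact2, ract2, sigma3, mulMid_tmul]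
  | add u v hu hv => simp only [map_add, TensorProduct.add_tmul, hu, hv]

lemma sigma3_ract2_tmul (y q : V) (w : V ⊗[𝔽] V) :
    sigma3 𝔽 V (ract2 𝔽 V y w ⊗ₜ q) = slot3R 𝔽 V y (sigma3 𝔽 V (w ⊗ₜ q)) := by
  induction w using TensorProduct.induction_on with
  | zero => simp
  | tmul u v => simp [ract2, sigma3, slot3R]
  | add u v hu hv => simp only [map_add, TensorProduct.add_tmul, hu, hv]

lemma sigma3_tmul_mul (x q : V) (w : V ⊗[𝔽] V) :
    sigma3 𝔽 V (w ⊗ₜ (x * q)) = slot1L 𝔽 V x (sigma3 𝔽 V (w ⊗ₜ q)) := by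
  induction w using TensorProduct.induction_on with
  | zero => simp
  | tmul u v => simp [sigma3, slot1L]
  | add u v hu hv => simp only [map_add, TensorProduct.add_tmul, hu, hv]

lemma sigma3_sigma3_star1r_tmul (y q : V) (w : V ⊗[𝔽] V) :
    sigma3 𝔽 V (sigma3 𝔽 V (star1r 𝔽 V y w ⊗ₜ q)) =
      slot3R 𝔽 V y (sigma3 𝔽 V (sigma3 𝔽 V (w ⊗ₜ q))) := by
  induction w using TensorProduct.induction_on with
  | zero => simp
  | tmul u v => simp [star1r, sigma3, slot3R]
  | add u v hu hv => simp only [map_add, TensorProduct.add_tmul, hu, hv]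

lemma sigma3_sigma3_star1l_tmul (x q : V) (w : V ⊗[𝔽] V) :
    sigma3 𝔽 V (sigma3 𝔽 V (star1l 𝔽 V x w ⊗ₜ q)) =
      slot1L 𝔽 V x (sigma3 𝔽 V (sigma3 𝔽 V (w ⊗ₜ q))) := by
  induction w using TensorProduct.induction_on with
  | zero => simp
  | tmul u v => simp [star1l, sigma3, slot1L]
  | add u v hu hv => simp only [map_add, TensorProduct.add_tmul, hu, hv]

lemma rTensor_ract2 (D : V →ₗ[𝔽] V ⊗[𝔽] V) (y : V) (B : V ⊗[𝔽] V) :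
    LinearMap.rTensor V D (ract2 𝔽 V y B) = slot3R 𝔽 V y (LinearMap.rTensor V D B) := by
  rw [ract2, slot3R, ← LinearMap.comp_apply, LinearMap.rTensor_comp_lTensor,
    ← LinearMap.lTensor_comp_rTensor, LinearMap.comp_apply]

lemma sigma3_rTensor_star1l (D : V →ₗ[𝔽] V ⊗[𝔽] V) (x : V) (A : V ⊗[𝔽] V) :
    sigma3 𝔽 V (LinearMap.rTensor V D (star1l 𝔽 V x A)) =
      slot1L 𝔽 V x (sigma3 𝔽 V (LinearMap.rTensor V D A)) := by
  induction A using TensorProduct.induction_on with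
  | zero => simp
  | tmul p q => simp only [star1l, LinearMap.lTensor_tmul, LinearMap.mulLeft_apply,
      LinearMap.rTensor_tmul, sigma3_tmul_mul]
  | add u v hu hv => simp only [map_add, hu, hv]

lemma rTensor_lact2
    (hL : ∀ a b c : V, Br a (b * c) = ract2 𝔽 V c (Br a b) + lact2 𝔽 V b (Br a c))
    (a x : V) (B : V ⊗[𝔽] V) :
    LinearMap.rTensor V (Br a) (lact2 𝔽 V x B) =
      slot1L 𝔽 V x (LinearMap.rTensor V (Br a) B) + mulMid (Br a x) B := by
  induction B using TensorProduct.induction_on with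
  | zero => simp
  | tmul p q =>
    simp only [lact2, slot1L, LinearMap.rTensor_tmul, LinearMap.mulLeft_apply, hL a x p,
      TensorProduct.add_tmul, mulMid_tmul]
    abel
  | add u v hu hv => simp only [map_add, hu, hv]; abel

lemma sigma3_rTensor_star1r
    (hL : ∀ a b c : V, Br a (b * c) = ract2 𝔽 V c (Br a b) + lact2 𝔽 V b (Br a c))
    (b y : V) (A : V ⊗[𝔽] V) :
    sigma3 𝔽 V (LinearMap.rTensor V (Br b) (star1r 𝔽 V y A)) =
      slot3R 𝔽 V y (sigma3 𝔽 V (LinearMap.rTensor V (Br b) A)) +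
        mulMid (swap2 𝔽 V A) (Br b y) := by
  induction A using TensorProduct.induction_on with
  | zero => simp
  | tmul p q =>
    simp only [star1r, LinearMap.rTensor_tmul, LinearMap.mulRight_apply, hL b p y,
      TensorProduct.add_tmul, map_add, sigma3_ract2_tmul, sigma3_lact2_tmul,
      TensorProduct.comm_tmul]
  | add u v hu hv => simp only [map_add, LinearMap.add_apply, hu, hv]; abel

lemma sigma3_sigma3_rTensor_mul
    (hR : ∀ a b c : V, Br (a * b) c = star1r 𝔽 V b (Br a c) + star1l 𝔽 V a (Br b c))
    (x y : V) (C : V ⊗[𝔽] V) :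
    sigma3 𝔽 V (sigma3 𝔽 V (LinearMap.rTensor V (Br (x * y)) C)) =
      slot3R 𝔽 V y (sigma3 𝔽 V (sigma3 𝔽 V (LinearMap.rTensor V (Br x) C))) +
        slot1L 𝔽 V x (sigma3 𝔽 V (sigma3 𝔽 V (LinearMap.rTensor V (Br y) C))) := by
  induction C using TensorProduct.induction_on with
  | zero => simp
  | tmul p q =>
    simp only [LinearMap.rTensor_tmul, hR x y p, TensorProduct.add_tmul, map_add,
      sigma3_sigma3_star1r_tmul, sigma3_sigma3_star1l_tmul]
  | add u v hu hv => simp only [map_add, hu, hv]; abel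

lemma triple_mul_right (hBr : IsDoubleBracket 𝔽 V Br) (hskew : IsSkew 𝔽 V Br) (a b x y : V) :
    triple Br a b (x * y) =
      slot1L 𝔽 V x (triple Br a b y) + slot3R 𝔽 V y (triple Br a b x) := by
  obtain ⟨hL, hR⟩ := hBr
  have cross_cancel : mulMid (swap2 𝔽 V (Br x a)) (Br b y) = - mulMid (Br a x) (Br b y) := by
    rw [hskew x a, map_neg, TensorProduct.comm_comm, map_neg, LinearMap.neg_apply]
  simp only [triple, brL, hL b x y, hR x y a, map_add, rTensor_ract2, rTensor_lact2 hL,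
    sigma3_rTensor_star1r hL, sigma3_rTensor_star1l, sigma3_sigma3_rTensor_mul hR,
    cross_cancel]
  abel

lemma triple_mul_left (hBr : IsDoubleBracket 𝔽 V Br) (hskew : IsSkew 𝔽 V Br) (b c x y : V) :
    triple Br (x * y) b c =
      slot2L 𝔽 V x (triple Br y b c) + slot1R 𝔽 V y (triple Br x b c) := by
  rw [triple_eq_sigma3_triple, triple_mul_right hBr hskew, map_add, sigma3_slot1L,
    sigma3_slot3R, ← triple_eq_sigma3_triple, ← triple_eq_sigma3_triple]

lemma triple_mul_mid (hBr : IsDoubleBracket 𝔽 V Br) (hskew : IsSkew 𝔽 V Br) (a c x y : V) :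
    triple Br a (x * y) c =
      slot3L 𝔽 V x (triple Br a y c) + slot2R 𝔽 V y (triple Br a x c) := by
  rw [triple_eq_sigma3_triple, triple_mul_left hBr hskew, map_add, sigma3_slot2L,
    sigma3_slot1R, ← triple_eq_sigma3_triple, ← triple_eq_sigma3_triple]

theorem statement_5_general (𝔽 : Type) [Field 𝔽] (V : Type) [Ring V] [Algebra 𝔽 V]
    (Br : V →ₗ[𝔽] V →ₗ[𝔽] V ⊗[𝔽] V) (hBr : IsDoubleBracket 𝔽 V Br)
    (hskew : IsSkew 𝔽 V Br) :
    (∀ b c x y : V, triple Br (x * y) b c =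
        slot2L 𝔽 V x (triple Br y b c) + slot1R 𝔽 V y (triple Br x b c)) ∧
    (∀ a c x y : V, triple Br a (x * y) c =
        slot3L 𝔽 V x (triple Br a y c) + slot2R 𝔽 V y (triple Br a x c)) ∧
    (∀ a b x y : V, triple Br a b (x * y) =
        slot1L 𝔽 V x (triple Br a b y) + slot3R 𝔽 V y (triple Br a b x)) :=
  ⟨triple_mul_left hBr hskew, triple_mul_mid hBr hskew, triple_mul_right hBr hskew⟩

/-- for a skewsymmetric 2-fold bracket, the triple bracket
`{{a,b,c}} = {{a,{{b,c}}}}_L + ({{b,{{c,a}}}}_L)^σ + ({{c,{{a,b}}}}_L)^{σ²}`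
is a 3-fold bracket, i.e. it satisfies the Leibniz rules in each slot. -/
theorem statement_5 (𝔽 : Type) [Field 𝔽] [CharZero 𝔽] (V : Type) [Ring V] [Algebra 𝔽 V]
    (Br : V →ₗ[𝔽] V →ₗ[𝔽] V ⊗[𝔽] V) (hBr : IsDoubleBracket 𝔽 V Br)
    (hskew : IsSkew 𝔽 V Br) :
    (∀ b c x y : V, triple Br (x * y) b c =
        slot2L 𝔽 V x (triple Br y b c) + slot1R 𝔽 V y (triple Br x b c)) ∧
    (∀ a c x y : V, triple Br a (x * y) c =
        slot3L 𝔽 V x (triple Br a y c) + slot2R 𝔽 V y (triple Br a x c)) ∧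
    (∀ a b x y : V, triple Br a b (x * y) =
        slot1L 𝔽 V x (triple Br a b y) + slot3R 𝔽 V y (triple Br a b x)) :=
  statement_5_general 𝔽 V Br hBr hskew
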